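/- Let k be a field of characteristic different from 2. Then the quotient ring k[x,y]/(x²+y², y²(y−x)) is a 6-dimensional k-vector space, with basis given by the images of the monomials 1, x, y, x², xy, x²y. (This computes the sl₂ homology of the Soergel bimodule B with respect to the Cautis differential, the building block for the Jones homology of (2,n) torus links.) -/

import Mathlib

/-!
In the quotient `y² = -x²`, `x³ = x²y` (as `x³ - x²y = (x - y)(x² + y²) + y²(y - x)`), and
`2x⁴ = (2x² - y²)(x² + y²) + (x + y) y²(y - x)`, so `x⁴ = 0` once `2` is invertible. Hence the
span of `1, x, y, x², xy, x²y` is stable under multiplication by `x` and `y`, and is everything.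
For independence, the linear map `k[x,y] → k⁶` sending `x^a y^b` to the coordinates these
relations predict kills every monomial multiple of both generators, hence the whole ideal, and
sends the six monomials to the standard basis.
-/

open MvPolynomial

theorem MvPolynomial.linearMap_eq_zero_of_mem_ideal_span {σ R M : Type*} [CommRing R]
    [AddCommGroup M] [Module R M] (L : MvPolynomial σ R →ₗ[R] M) {s : Set (MvPolynomial σ R)}
    (hL : ∀ f ∈ s, ∀ m, L (monomial m 1 * f) = 0) {p : MvPolynomial σ R}
    (hp : p ∈ Ideal.span s) : L p = 0 := by
  suffices ∀ r, L (r * p) = 0 by simpa using this 1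
  induction hp using Submodule.span_induction with
  | mem f hf =>
    have : L ∘ₗ LinearMap.mulRight R f = 0 :=
      linearMap_ext fun m ↦ LinearMap.ext_ring (by simpa using hL f hf m)
    exact LinearMap.congr_fun this
  | zero => simp
  | add p q _ _ hp hq => intro r; rw [mul_add, map_add, hp, hq, add_zero]
  | smul a p _ hp => intro r; rw [smul_eq_mul, ← mul_assoc]; exact hp _

theorem Ideal.Quotient.linearIndependent_mk_of_linearMap {R A ι : Type*} [CommRing R]
    [CommRing A] [Algebra R A] [Fintype ι] [DecidableEq ι] {I : Ideal A} {v : ι → A}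
    (L : A →ₗ[R] ι → R)
    (hI : ∀ p ∈ I, L p = 0) (hv : ∀ i, L (v i) = Pi.single i 1) :
    LinearIndependent R fun i ↦ Ideal.Quotient.mk I (v i) := by
  rw [Fintype.linearIndependent_iff]
  intro c hc
  have hmem : ∑ i, c i • v i ∈ I := by
    rw [← Ideal.Quotient.eq_zero_iff_mem, ← Ideal.Quotient.mkₐ_eq_mk R, map_sum]
    simpa [map_smul] using hc
  have := hI _ hmem
  simp only [map_sum, map_smul, hv] at this
  intro i
  simpa [Pi.single_apply] using congrFun this i

theorem MvPolynomial.eq_top_of_one_mem_of_X_mul_mem {σ R : Type*} [CommRing R]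
    {I : Ideal (MvPolynomial σ R)} {S : Submodule R (MvPolynomial σ R ⧸ I)} (h1 : 1 ∈ S)
    (hX : ∀ i, ∀ s ∈ S, Ideal.Quotient.mk I (X i) * s ∈ S) : S = ⊤ := by
  rw [eq_top_iff]
  rintro q -
  obtain ⟨p, rfl⟩ := Ideal.Quotient.mk_surjective q
  induction p using MvPolynomial.induction_on with
  | C a =>
    rw [← algebraMap_eq, Ideal.Quotient.mk_algebraMap, Algebra.algebraMap_eq_smul_one]
    exact S.smul_mem a h1
  | add p q hp hq => rw [map_add]; exact S.add_mem hp hq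
  | mul_X p i hp => rw [map_mul, mul_comm]; exact hX i _ hp

theorem MvPolynomial.monomial_one_eq_X_zero_pow_mul_X_one_pow {R : Type*} [CommSemiring R]
    (m : Fin 2 →₀ ℕ) :
    monomial m (1 : R) = X 0 ^ m 0 * X 1 ^ m 1 := by
  rw [monomial_eq, C_1, one_mul, Finsupp.prod_fintype _ _ (by simp), Fin.prod_univ_two]

noncomputable section CautisQuotient

variable (k : Type*) [CommRing k]

def cautisIdeal : Ideal (MvPolynomial (Fin 2) k) :=
  Ideal.span {X 0 ^ 2 + X 1 ^ 2, X 1 ^ 2 * (X 1 - X 0)}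

def cautisMonomials : Fin 6 → MvPolynomial (Fin 2) k :=
  ![1, X 0, X 1, X 0 ^ 2, X 0 * X 1, X 0 ^ 2 * X 1]

/-- The coordinates of the class of `x ^ a * y ^ b` in the basis `cautisMonomials`, read off from
the relations `y² = -x²`, `x³ = x²y` and `x⁴ = 0` of the quotient. -/
def cautisCoord : ℕ → ℕ → Fin 6 → k
  | 0, 0 => Pi.single 0 1
  | 1, 0 => Pi.single 1 1
  | 0, 1 => Pi.single 2 1
  | 2, 0 => Pi.single 3 1
  | 0, 2 => -Pi.single 3 1
  | 1, 1 => Pi.single 4 1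
  | 3, 0 | 2, 1 => Pi.single 5 1
  | 1, 2 | 0, 3 => -Pi.single 5 1
  | _, _ => 0

def cautisCoordMap : MvPolynomial (Fin 2) k →ₗ[k] Fin 6 → k :=
  (basisMonomials (Fin 2) k).constr k fun m ↦ cautisCoord k (m 0) (m 1)

variable {k}

theorem cautisCoord_add_two_add (a b : ℕ) :
    cautisCoord k (a + 2) b + cautisCoord k a (b + 2) = 0 := by
  rcases a with _ | _ | a <;> rcases b with _ | _ | b <;> simp [cautisCoord]

theorem cautisCoord_add_three (a b : ℕ) :
    cautisCoord k a (b + 3) = cautisCoord k (a + 1) (b + 2) := by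
  rcases a with _ | a <;> rcases b with _ | b <;> simp [cautisCoord]

theorem cautisCoordMap_X_pow_mul_X_pow (a b : ℕ) :
    cautisCoordMap k (X 0 ^ a * X 1 ^ b) = cautisCoord k a b := by
  have := (basisMonomials (Fin 2) k).constr_basis k (fun m ↦ cautisCoord k (m 0) (m 1))
    (Finsupp.single 0 a + Finsupp.single 1 b)
  simpa [cautisCoordMap, monomial_one_eq_X_zero_pow_mul_X_one_pow] using this

theorem cautisCoordMap_eq_zero_of_mem {p : MvPolynomial (Fin 2) k} (hp : p ∈ cautisIdeal k) :
    cautisCoordMap k p = 0 := by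
  refine linearMap_eq_zero_of_mem_ideal_span _ ?_ hp
  rintro f (rfl | rfl) m
  all_goals
    rw [monomial_one_eq_X_zero_pow_mul_X_one_pow]
    generalize m 0 = a, m 1 = b
  · rw [show (X 0 ^ a * X 1 ^ b * (X 0 ^ 2 + X 1 ^ 2) : MvPolynomial (Fin 2) k) =
      X 0 ^ (a + 2) * X 1 ^ b + X 0 ^ a * X 1 ^ (b + 2) by ring, map_add,
      cautisCoordMap_X_pow_mul_X_pow, cautisCoordMap_X_pow_mul_X_pow, cautisCoord_add_two_add]
  · rw [show (X 0 ^ a * X 1 ^ b * (X 1 ^ 2 * (X 1 - X 0)) : MvPolynomial (Fin 2) k) =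
      X 0 ^ a * X 1 ^ (b + 3) - X 0 ^ (a + 1) * X 1 ^ (b + 2) by ring, map_sub,
      cautisCoordMap_X_pow_mul_X_pow, cautisCoordMap_X_pow_mul_X_pow, cautisCoord_add_three,
      sub_self]

theorem cautisCoordMap_cautisMonomials (i : Fin 6) :
    cautisCoordMap k (cautisMonomials k i) = Pi.single i 1 := by
  have h (a b : ℕ) (i : Fin 6) (hi : cautisCoord k a b = Pi.single i 1) :
      cautisCoordMap k (X 0 ^ a * X 1 ^ b) = Pi.single i 1 := by
    rw [cautisCoordMap_X_pow_mul_X_pow, hi]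
  fin_cases i
  · simpa [cautisMonomials] using h 0 0 0 rfl
  · simpa [cautisMonomials] using h 1 0 1 rfl
  · simpa [cautisMonomials] using h 0 1 2 rfl
  · simpa [cautisMonomials] using h 2 0 3 rfl
  · simpa [cautisMonomials] using h 1 1 4 rfl
  · simpa [cautisMonomials] using h 2 1 5 rfl

theorem linearIndependent_mk_cautisMonomials :
    LinearIndependent k fun i ↦ Ideal.Quotient.mk (cautisIdeal k) (cautisMonomials k i) :=
  Ideal.Quotient.linearIndependent_mk_of_linearMap (cautisCoordMap k)
    (fun _ ↦ cautisCoordMap_eq_zero_of_mem) cautisCoordMap_cautisMonomials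

local notation "x" => Ideal.Quotient.mk (cautisIdeal k) (X 0 : MvPolynomial (Fin 2) k)
local notation "y" => Ideal.Quotient.mk (cautisIdeal k) (X 1 : MvPolynomial (Fin 2) k)
local notation "v" => ![1, x, y, x ^ 2, x * y, x ^ 2 * y]

variable (k)

theorem cautis_x_sq_add_y_sq : x ^ 2 + y ^ 2 = 0 := by
  rw [← map_pow, ← map_pow, ← map_add, Ideal.Quotient.eq_zero_iff_mem]
  exact Ideal.subset_span (by simp)

theorem cautis_y_sq_mul_y_sub_x : y ^ 2 * (y - x) = 0 := by
  rw [← map_pow, ← map_sub, ← map_mul, Ideal.Quotient.eq_zero_iff_mem]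
  exact Ideal.subset_span (by simp)

theorem cautis_y_sq : y ^ 2 = -x ^ 2 := by
  linear_combination cautis_x_sq_add_y_sq k

theorem cautis_x_pow_three : x ^ 3 = x ^ 2 * y := by
  linear_combination (x - y) * cautis_x_sq_add_y_sq k + cautis_y_sq_mul_y_sub_x k

theorem mk_cautisMonomials :
    (fun i ↦ Ideal.Quotient.mk (cautisIdeal k) (cautisMonomials k i)) = v := by
  ext i; fin_cases i <;> simp [cautisMonomials]

variable {k}

theorem cautis_x_pow_four (h2 : IsUnit (2 : k)) : x ^ 4 = 0 := by
  have h2' := h2.map (algebraMap k (MvPolynomial (Fin 2) k ⧸ cautisIdeal k))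
  rw [map_ofNat] at h2'
  rw [← h2'.mul_right_eq_zero]
  linear_combination
    (2 * x ^ 2 - y ^ 2) * cautis_x_sq_add_y_sq k + (x + y) * cautis_y_sq_mul_y_sub_x k

theorem X_mul_mem_span_cautis (h2 : IsUnit (2 : k)) (i : Fin 2) (j : Fin 6) :
    Ideal.Quotient.mk (cautisIdeal k) (X i) * v j ∈ Submodule.span k (Set.range v) := by
  have mem (i : Fin 6) (q) (hq : q = v i) : q ∈ Submodule.span k (Set.range v) :=
    hq ▸ Submodule.subset_span ⟨i, rfl⟩
  have mem_neg (i : Fin 6) (q) (hq : q = -v i) : q ∈ Submodule.span k (Set.range v) :=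
    hq ▸ neg_mem (mem i _ rfl)
  have mem_zero (q) (hq : q = 0) : q ∈ Submodule.span k (Set.range v) := hq ▸ zero_mem _
  have hsq := cautis_y_sq k
  have hcube := cautis_x_pow_three k
  have hfour := cautis_x_pow_four h2
  fin_cases i <;> fin_cases j <;> simp only [Fin.reduceFinMk, Fin.isValue, Matrix.cons_val]
  · exact mem 1 _ (by simp only [Matrix.cons_val]; ring)
  · exact mem 3 _ (by simp only [Matrix.cons_val]; ring)
  · exact mem 4 _ (by simp only [Matrix.cons_val])
  · exact mem 5 _ (by simp only [Matrix.cons_val]; linear_combination hcube)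
  · exact mem 5 _ (by simp only [Matrix.cons_val]; ring)
  · exact mem_zero _ (by linear_combination y * hcube + x ^ 2 * hsq - hfour)
  · exact mem 2 _ (by simp only [Matrix.cons_val]; ring)
  · exact mem 4 _ (by simp only [Matrix.cons_val]; ring)
  · exact mem_neg 3 _ (by simp only [Matrix.cons_val]; linear_combination hsq)
  · exact mem 5 _ (by simp only [Matrix.cons_val]; ring)
  · exact mem_neg 5 _ (by simp only [Matrix.cons_val]; linear_combination x * hsq - hcube)
  · exact mem_zero _ (by linear_combination x ^ 2 * hsq - hfour)

theorem span_mk_cautisMonomials (h2 : IsUnit (2 : k)) :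
    Submodule.span k (Set.range fun i ↦ Ideal.Quotient.mk (cautisIdeal k) (cautisMonomials k i)) =
      ⊤ := by
  rw [mk_cautisMonomials]
  refine eq_top_of_one_mem_of_X_mul_mem (Submodule.subset_span ⟨0, rfl⟩) fun i s hs ↦ ?_
  refine (Submodule.span_le (p := (Submodule.span k _).comap (LinearMap.mulLeft k _))).mpr ?_ hs
  rintro _ ⟨j, rfl⟩
  exact X_mul_mem_span_cautis h2 i j

end CautisQuotient

theorem stmt_19 (k : Type*) [Field k] (hchar : (2 : k) ≠ 0) :
    ∃ b : Module.Basis (Fin 6) k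
        (MvPolynomial (Fin 2) k ⧸
          Ideal.span {(X 0 : MvPolynomial (Fin 2) k) ^ 2 + X 1 ^ 2,
            (X 1 : MvPolynomial (Fin 2) k) ^ 2 * (X 1 - X 0)}),
      ∀ j : Fin 6,
        b j = Ideal.Quotient.mk _
          (![1, X 0, X 1, X 0 ^ 2, X 0 * X 1, X 0 ^ 2 * X 1] j) :=
  ⟨.mk linearIndependent_mk_cautisMonomials (span_mk_cautisMonomials hchar.isUnit).ge,
    Module.Basis.mk_apply _ _⟩
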